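/- There exist two finite iCGS G1 and G2 over a single agent and a single atom p, and states q0 ∈ G1, q0' ∈ G2, such that (G1, q0) ⊭ ⟨⟨1⟩⟩ F p and (G2, q0') ⊨ ⟨⟨1⟩⟩ F p under the imperfect-information memoryless (uniform-strategy) semantics, even though there is a relation between them satisfying all conditions of A-simulation except the injectivity condition (2) on common-knowledge neighborhoods. Concretely: G1 has states q0, q1, q2, q3 with q1 ~_1 q2, actions a, b; from q0 both successors q1, q2 are reached; in q1 action a loops and b goes to q3; in q2 action b loops and a goes to q3; p holds only at q3, which is absorbing. Then (G1, q0) ⊭ ⟨⟨1⟩⟩ F p. -/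

import Mathlib

/-- An imperfect-information concurrent game structure (iCGS), given as raw data;
the defining axioms are collected in `iCGS.Valid`. -/
structure iCGS (Ag AP S Act : Type) where
  init : S
  indist : Ag → S → S → Prop
  protocol : Ag → S → Set Act
  trans : S → (Ag → Act) → S → Prop
  label : S → Set AP

namespace iCGS

variable {Ag AP S S' Act Act' : Type}

/-- The axioms of an iCGS. -/
def Valid (G : iCGS Ag AP S Act) : Prop :=
  (∀ i, Equivalence (G.indist i)) ∧
  (∀ i s, (G.protocol i s).Nonempty) ∧
  (∀ i s s', G.indist i s s' → G.protocol i s = G.protocol i s') ∧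
  (∀ s a, (∃ s', G.trans s a s') ↔ ∀ i, a i ∈ G.protocol i s)

/-- Common-knowledge reachability for coalition `A`:
reflexive-transitive closure of the union of the `∼ᵢ`, `i ∈ A`. -/
def ck (G : iCGS Ag AP S Act) (A : Set Ag) : S → S → Prop :=
  Relation.ReflTransGen (fun s s' => ∃ i ∈ A, G.indist i s s')

/-- Common-knowledge neighbourhood `C_A(q)`. -/
def CKN (G : iCGS Ag AP S Act) (A : Set Ag) (q : S) : Set S := {r | G.ck A q r}

/-- "Everybody knows" neighbourhood `E_A(q)`. -/
def EKN (G : iCGS Ag AP S Act) (A : Set Ag) (q : S) : Set S :=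
  {r | ∃ i ∈ A, G.indist i q r}

/-- `σ` is a partial uniform strategy for coalition `A` with domain `Q`. -/
def IsPStrat (G : iCGS Ag AP S Act) (A : Set Ag) (Q : Set S) (σ : Ag → S → Act) : Prop :=
  (∀ i ∈ A, ∀ s ∈ Q, σ i s ∈ G.protocol i s) ∧
  (∀ i ∈ A, ∀ s ∈ Q, ∀ t ∈ Q, G.indist i s t → σ i s = σ i t)

/-- `σ` is a (total) uniform memoryless strategy for coalition `A`. -/
def IsStrat (G : iCGS Ag AP S Act) (A : Set Ag) (σ : Ag → S → Act) : Prop :=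
  G.IsPStrat A Set.univ σ

/-- Successors of `s` under joint actions compatible with `σ` on coalition `A`. -/
def succ (G : iCGS Ag AP S Act) (A : Set Ag) (σ : Ag → S → Act) (s : S) : Set S :=
  {t | ∃ a : Ag → Act, (∀ i ∈ A, a i = σ i s) ∧ G.trans s a t}

/-- Objective outcome set of strategy `σ` at `q` (runs as infinite state sequences). -/
def OutObj (G : iCGS Ag AP S Act) (A : Set Ag) (σ : Ag → S → Act) (q : S) :
    Set (ℕ → S) :=
  {lam | lam 0 = q ∧ ∀ j, lam (j + 1) ∈ G.succ A σ (lam j)}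

/-- Subjective outcome set: union of objective outcomes over states indistinguishable
from `q` for some member of the coalition. -/
def OutSubj (G : iCGS Ag AP S Act) (A : Set Ag) (σ : Ag → S → Act) (q : S) :
    Set (ℕ → S) :=
  {lam | ∃ i ∈ A, ∃ r, G.indist i q r ∧ lam ∈ G.OutObj A σ r}

/-- Outcome set: subjective (`x = true`) or objective (`x = false`).
(For a nonempty coalition the subjective case coincides with the union of
objective outcomes over indistinguishable states, by reflexivity; for the
empty coalition it degenerates to the objective case.) -/
def Out (G : iCGS Ag AP S Act) (x : Bool) (A : Set Ag) (σ : Ag → S → Act) (q : S) :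
    Set (ℕ → S) :=
  if x then G.OutObj A σ q ∪ G.OutSubj A σ q else G.OutObj A σ q

/-- `R` is a simulation for coalition `A` from `G` to `G'` (Def. of simulation):
existence of a strategy simulator over common-knowledge neighbourhoods with
(a) atom agreement, (b) epistemic back-condition, (c) strategy transfer, and
(2) injectivity modulo common-knowledge neighbourhoods. -/
def IsSimulation (G : iCGS Ag AP S Act) (G' : iCGS Ag AP S' Act') (A : Set Ag)
    (R : S → S' → Prop) : Prop :=
  (∃ ST : Set S → Set S' → (Ag → S → Act) → (Ag → S' → Act'),
    ∀ q q', R q q' →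
      (∀ σ, G.IsPStrat A (G.CKN A q) σ →
        G'.IsPStrat A (G'.CKN A q') (ST (G.CKN A q) (G'.CKN A q') σ)) ∧
      (∀ r ∈ G.CKN A q, ∀ r' ∈ G'.CKN A q', R r r' →
        ∀ σ, G.IsPStrat A (G.CKN A q) σ →
          ∀ s' ∈ G'.succ A (ST (G.CKN A q) (G'.CKN A q') σ) r',
            ∃ s ∈ G.succ A σ r, R s s')) ∧
  (∀ q q', R q q' → G.label q = G'.label q') ∧
  (∀ q q', R q q' → ∀ i ∈ A, ∀ r', G'.indist i q' r' →
    ∃ r, G.indist i q r ∧ R r r') ∧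
  (∀ q₁ q₂ q', R q₁ q' → R q₂ q' → G.CKN A q₁ = G.CKN A q₂)

/-- `R` is a bisimulation for `A` iff both `R` and its converse are `A`-simulations. -/
def IsBisimulation (G : iCGS Ag AP S Act) (G' : iCGS Ag AP S' Act') (A : Set Ag)
    (R : S → S' → Prop) : Prop :=
  G.IsSimulation G' A R ∧ G'.IsSimulation G A (fun q' q => R q q')

end iCGS
mutual
/-- State formulas of ATL*. -/
inductive SF (AP Ag : Type) : Type where
  | atom : AP → SF AP Ag
  | neg : SF AP Ag → SF AP Ag
  | imp : SF AP Ag → SF AP Ag → SF AP Ag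
  | coal : Set Ag → PF AP Ag → SF AP Ag
/-- Path formulas of ATL*. -/
inductive PF (AP Ag : Type) : Type where
  | of : SF AP Ag → PF AP Ag
  | neg : PF AP Ag → PF AP Ag
  | imp : PF AP Ag → PF AP Ag → PF AP Ag
  | next : PF AP Ag → PF AP Ag
  | untl : PF AP Ag → PF AP Ag → PF AP Ag
end

variable {Ag AP S Act : Type}

mutual
/-- Satisfaction of ATL* state formulas; `x = true` is the subjective,
`x = false` the objective imperfect-information memoryless semantics. -/
def SSat (G : iCGS Ag AP S Act) (x : Bool) : S → SF AP Ag → Prop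
  | s, .atom p => p ∈ G.label s
  | s, .neg φ => ¬ SSat G x s φ
  | s, .imp φ ψ => SSat G x s φ → SSat G x s ψ
  | s, .coal A ψ =>
      ∃ σ, G.IsStrat A σ ∧ ∀ lam ∈ G.Out x A σ s, PSat G x lam ψ
/-- Satisfaction of ATL* path formulas on runs. -/
def PSat (G : iCGS Ag AP S Act) (x : Bool) : (ℕ → S) → PF AP Ag → Prop
  | lam, .of φ => SSat G x (lam 0) φ
  | lam, .neg ψ => ¬ PSat G x lam ψ
  | lam, .imp ψ χ => PSat G x lam ψ → PSat G x lam χ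
  | lam, .next ψ => PSat G x (fun n => lam (n + 1)) ψ
  | lam, .untl ψ χ => ∃ j, PSat G x (fun n => lam (n + j)) χ ∧
      ∀ k < j, PSat G x (fun n => lam (n + k)) ψ
end

mutual
/-- `φ` is an `A`-formula: `A` is the only coalition occurring in it. -/
def SOnly (A : Set Ag) : SF AP Ag → Prop
  | .atom _ => True
  | .neg φ => SOnly A φ
  | .imp φ ψ => SOnly A φ ∧ SOnly A ψ
  | .coal B ψ => B = A ∧ POnly A ψ
def POnly (A : Set Ag) : PF AP Ag → Prop
  | .of φ => SOnly A φ
  | .neg ψ => POnly A ψ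
  | .imp ψ χ => POnly A ψ ∧ POnly A χ
  | .next ψ => POnly A ψ
  | .untl ψ χ => POnly A ψ ∧ POnly A χ
end

namespace iCGS
variable {Ag AP S S' Act Act' : Type}

/-- Weak simulation: all conditions of an `A`-simulation except the injectivity
condition (2) on common-knowledge neighbourhoods. -/
def IsWeakSimulation (G : iCGS Ag AP S Act) (G' : iCGS Ag AP S' Act') (A : Set Ag)
    (R : S → S' → Prop) : Prop :=
  (∃ ST : Set S → Set S' → (Ag → S → Act) → (Ag → S' → Act'),
    ∀ q q', R q q' →
      (∀ σ, G.IsPStrat A (G.CKN A q) σ →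
        G'.IsPStrat A (G'.CKN A q') (ST (G.CKN A q) (G'.CKN A q') σ)) ∧
      (∀ r ∈ G.CKN A q, ∀ r' ∈ G'.CKN A q', R r r' →
        ∀ σ, G.IsPStrat A (G.CKN A q) σ →
          ∀ s' ∈ G'.succ A (ST (G.CKN A q) (G'.CKN A q') σ) r',
            ∃ s ∈ G.succ A σ r, R s s')) ∧
  (∀ q q', R q q' → G.label q = G'.label q') ∧
  (∀ q q', R q q' → ∀ i ∈ A, ∀ r', G'.indist i q' r' →
    ∃ r, G.indist i q r ∧ R r r')

/-- Weak bisimulation: `R` and its converse are weak simulations. -/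
def IsWeakBisimulation (G : iCGS Ag AP S Act) (G' : iCGS Ag AP S' Act') (A : Set Ag)
    (R : S → S' → Prop) : Prop :=
  G.IsWeakSimulation G' A R ∧ G'.IsWeakSimulation G A (fun q' q => R q q')

end iCGS

/-- The concrete single-agent model `G₁` of the counterexample: states
`q0 = 0, q1 = 1, q2 = 2, q3 = 3`, actions `a = 0, b = 1`, with `q1 ∼₁ q2`;
from `q0` both `q1` and `q2` are reachable (on any action); in `q1` action `a`
loops and `b` goes to `q3`; in `q2` action `b` loops and `a` goes to `q3`;
the atom `p` holds only at the absorbing state `q3`. -/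
def G1ex : iCGS Unit Unit (Fin 4) (Fin 2) where
  init := 0
  indist := fun _ s t =>
    s = t ∨ (s.val = 1 ∧ t.val = 2) ∨ (s.val = 2 ∧ t.val = 1)
  protocol := fun _ _ => Set.univ
  trans := fun s a t =>
    if s.val = 0 then (t.val = 1 ∨ t.val = 2)
    else if s.val = 1 then (if a () = 0 then t = s else t.val = 3)
    else if s.val = 2 then (if a () = 1 then t = s else t.val = 3)
    else t = s
  label := fun s => {_u | s.val = 3}

/-- `F p` as the ATL* path formula `⊤ U p` over a single atom. -/
def Fp : PF Unit Unit :=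
  PF.untl (PF.imp (PF.of (SF.atom ())) (PF.of (SF.atom ()))) (PF.of (SF.atom ()))

/-! In `G1` a uniform strategy plays one action `c` at both `q1` and `q2`, and `c` is a self-loop
at one of them, so the run `q0, qᵢ, qᵢ, …` never sees `p`. `G2` splits `q1` into `A, A'` and `q2`
into `B, B'`, crossing the indistinguishability to `A ∼ B'`, `B ∼ A'`: now a uniform strategy may
play `a` at `A, B'` and `b` at `B, A'`, and every run reaches `p` in three steps.
Collapsing `A, A' ↦ q1` and `B, B' ↦ q2` is a bounded morphism of iCGS that is injective on every
common-knowledge class, and the graph of such a map is always a weak bisimulation. This graph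
violates condition (2), since the two classes `{A, B'}` and `{B, A'}` collapse onto the same class
`{q1, q2}`. -/

namespace iCGS

theorem mem_succ_univ (G : iCGS Ag AP S Act) (σ : Ag → S → Act) (s t : S) :
    t ∈ G.succ Set.univ σ s ↔ G.trans s (fun i => σ i s) t := by
  constructor
  · rintro ⟨a, ha, h⟩
    rwa [show a = fun i => σ i s from funext fun i => ha i trivial] at h
  · exact fun h => ⟨_, fun _ _ => rfl, h⟩

theorem mem_CKN_univ_iff {G : iCGS Unit AP S Act} (h : Equivalence (G.indist ())) {q r : S} :
    r ∈ G.CKN Set.univ q ↔ G.indist () q r := by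
  have hstep : (fun s s' => ∃ i ∈ (Set.univ : Set Unit), G.indist i s s') = G.indist () := by
    ext s s'
    exact ⟨fun ⟨_, _, h⟩ => h, fun h => ⟨(), trivial, h⟩⟩
  have : Std.Refl (G.indist ()) := ⟨h.refl⟩
  have : IsTrans S (G.indist ()) := ⟨fun _ _ _ => h.trans⟩
  change Relation.ReflTransGen _ q r ↔ _
  rw [hstep, Relation.reflTransGen_eq_self]

theorem valid_of_protocol_eq_univ [Nonempty Act] (G : iCGS Ag AP S Act)
    (hindist : ∀ i, Equivalence (G.indist i)) (hprotocol : ∀ i s, G.protocol i s = Set.univ)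
    (htotal : ∀ s a, ∃ t, G.trans s a t) : G.Valid :=
  ⟨hindist, fun i s => hprotocol i s ▸ Set.univ_nonempty,
    fun i s s' _ => by rw [hprotocol, hprotocol],
    fun s a => iff_of_true (htotal s a) fun i => hprotocol i s ▸ trivial⟩

theorem OutObj_subset_Out (G : iCGS Ag AP S Act) (x : Bool) (A : Set Ag) (σ : Ag → S → Act)
    (q : S) : G.OutObj A σ q ⊆ G.Out x A σ q := by
  cases x
  · exact subset_rfl
  · exact Set.subset_union_left

theorem Out_eq_OutObj {G : iCGS Ag AP S Act} {A : Set Ag} {q : S}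
    (hq : ∀ i ∈ A, ∀ r, G.indist i q r → r = q) (x : Bool) (σ : Ag → S → Act) :
    G.Out x A σ q = G.OutObj A σ q := by
  cases x
  · rfl
  · refine Set.union_eq_left.2 ?_
    rintro lam ⟨i, hi, r, hr, hlam⟩
    rwa [hq i hi r hr] at hlam

theorem lasso_mem_OutObj {G : iCGS Ag AP S Act} {A : Set Ag} {σ : Ag → S → Act} {q s : S}
    (hq : s ∈ G.succ A σ q) (hs : s ∈ G.succ A σ s) :
    (fun n => if n = 0 then q else s) ∈ G.OutObj A σ q :=
  ⟨rfl, fun j => by cases j <;> simpa⟩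

structure IsBoundedMorphism {S' : Type} (G' : iCGS Ag AP S' Act)
    (G : iCGS Ag AP S Act) (A : Set Ag) (f : S' → S) : Prop where
  label_comp : ∀ s, G.label (f s) = G'.label s
  protocol_comp : ∀ i ∈ A, ∀ s, G.protocol i (f s) = G'.protocol i s
  indist_forth : ∀ i ∈ A, ∀ s t, G'.indist i s t → G.indist i (f s) (f t)
  indist_back : ∀ i ∈ A, ∀ s r, G.indist i (f s) r → ∃ t, G'.indist i s t ∧ f t = r
  trans_forth : ∀ s a t, G'.trans s a t → G.trans (f s) a (f t)
  trans_back : ∀ s a r, G.trans (f s) a r → ∃ t, G'.trans s a t ∧ f t = r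

namespace IsBoundedMorphism

variable {S' : Type} {G' : iCGS Ag AP S' Act} {G : iCGS Ag AP S Act} {A : Set Ag}
  {f : S' → S}

theorem mapsTo_CKN (hf : IsBoundedMorphism G' G A f) (q : S') :
    Set.MapsTo f (G'.CKN A q) (G.CKN A (f q)) := fun _ h =>
  Relation.ReflTransGen.lift f (fun _ _ ⟨i, hi, h⟩ => ⟨i, hi, hf.indist_forth i hi _ _ h⟩) _ _ h

theorem surjOn_CKN (hf : IsBoundedMorphism G' G A f) (q : S') :
    Set.SurjOn f (G'.CKN A q) (G.CKN A (f q)) := by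
  intro r (hr : G.ck A (f q) r)
  induction hr with
  | refl => exact ⟨q, .refl, rfl⟩
  | tail _ hstep ih =>
    obtain ⟨t, ht, rfl⟩ := ih
    obtain ⟨i, hi, hind⟩ := hstep
    obtain ⟨u, hu, rfl⟩ := hf.indist_back i hi t _ hind
    exact ⟨u, Relation.ReflTransGen.tail ht ⟨i, hi, hu⟩, rfl⟩

theorem indist_of_indist_map (hf : IsBoundedMorphism G' G A f)
    (hinj : ∀ q, Set.InjOn f (G'.CKN A q)) {i : Ag} (hi : i ∈ A) {q u v : S'}
    (hu : u ∈ G'.CKN A q) (hv : v ∈ G'.CKN A q) (h : G.indist i (f u) (f v)) :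
    G'.indist i u v := by
  obtain ⟨w, hw, hwv⟩ := hf.indist_back i hi u _ h
  have hw' : w ∈ G'.CKN A q := Relation.ReflTransGen.tail hu ⟨i, hi, hw⟩
  rwa [← hinj q hw' hv hwv]

theorem isWeakSimulation (hf : IsBoundedMorphism G' G A f) :
    G.IsWeakSimulation G' A (fun q q' => q = f q') := by
  refine ⟨⟨fun _ _ σ i s => σ i (f s), ?_⟩, ?_, ?_⟩
  · rintro _ q' rfl
    refine ⟨fun σ hσ => ⟨fun i hi s hs => ?_, fun i hi s hs t ht hst => ?_⟩, ?_⟩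
    · rw [← hf.protocol_comp i hi]
      exact hσ.1 i hi _ (hf.mapsTo_CKN q' hs)
    · exact hσ.2 i hi _ (hf.mapsTo_CKN q' hs) _ (hf.mapsTo_CKN q' ht)
        (hf.indist_forth i hi s t hst)
    · rintro _ - r' - rfl σ - s' ⟨a, ha, htr⟩
      exact ⟨f s', ⟨a, ha, hf.trans_forth _ _ _ htr⟩, rfl⟩
  · rintro _ q' rfl
    exact hf.label_comp q'
  · rintro _ q' rfl i hi r' h
    exact ⟨f r', hf.indist_forth i hi _ _ h, rfl⟩

theorem isWeakSimulation_symm [Nonempty S'] (hf : IsBoundedMorphism G' G A f)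
    (hinj : ∀ q, Set.InjOn f (G'.CKN A q)) :
    G'.IsWeakSimulation G A (fun q' q => q = f q') := by
  -- A strategy of `G'` is carried to `G` through the inverse of `f` on the common-knowledge
  -- class; injectivity of `f` there keeps the carried strategy uniform.
  refine ⟨⟨fun Q _ σ i s => σ i (Function.invFunOn f Q s), ?_⟩, ?_, ?_⟩
  · rintro q' _ rfl
    set g := Function.invFunOn f (G'.CKN A q')
    have hg : ∀ s ∈ G.CKN A (f q'), g s ∈ G'.CKN A q' ∧ f (g s) = s := fun s hs =>
      Function.invFunOn_pos (hf.surjOn_CKN q' hs)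
    refine ⟨fun σ hσ => ⟨fun i hi s hs => ?_, fun i hi s hs t ht hst => ?_⟩, ?_⟩
    · obtain ⟨hgs, hfgs⟩ := hg s hs
      have := hσ.1 i hi _ hgs
      rwa [← hf.protocol_comp i hi, hfgs] at this
    · obtain ⟨hgs, hfgs⟩ := hg s hs
      obtain ⟨hgt, hfgt⟩ := hg t ht
      rw [← hfgs, ← hfgt] at hst
      exact hσ.2 i hi _ hgs _ hgt (hf.indist_of_indist_map hinj hi hgs hgt hst)
    · rintro r' hr' _ - rfl σ - s ⟨a, ha, htr⟩
      have hgr : g (f r') = r' := (hinj q').leftInvOn_invFunOn hr'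
      obtain ⟨t, ht, rfl⟩ := hf.trans_back r' a s htr
      exact ⟨t, ⟨a, fun i hi => (ha i hi).trans (congrArg (σ i) hgr), ht⟩, rfl⟩
  · rintro q' _ rfl
    exact (hf.label_comp q').symm
  · rintro q' _ rfl i hi r h
    obtain ⟨t, ht, rfl⟩ := hf.indist_back i hi q' r h
    exact ⟨t, ht, rfl⟩

theorem isWeakBisimulation [Nonempty S'] (hf : IsBoundedMorphism G' G A f)
    (hinj : ∀ q, Set.InjOn f (G'.CKN A q)) :
    G.IsWeakBisimulation G' A (fun q q' => q = f q') :=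
  ⟨hf.isWeakSimulation, hf.isWeakSimulation_symm hinj⟩

end IsBoundedMorphism

end iCGS

theorem PSat_Fp_iff {G : iCGS Unit Unit S Act} {x : Bool} {lam : ℕ → S} :
    PSat G x lam Fp ↔ ∃ j, () ∈ G.label (lam j) := by
  simp [Fp, PSat, SSat]

theorem SSat_coal_Fp_iff {G : iCGS Unit Unit S Act} {x : Bool} {A : Set Unit} {q : S} :
    SSat G x q (.coal A Fp) ↔
      ∃ σ, G.IsStrat A σ ∧ ∀ lam ∈ G.Out x A σ q, ∃ j, () ∈ G.label (lam j) := by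
  simp only [SSat, PSat_Fp_iff]

theorem not_SSat_coal_Fp_of_trap {G : iCGS Unit Unit S Act} {A : Set Unit} {q : S}
    (hq : () ∉ G.label q)
    (htrap : ∀ σ, G.IsStrat A σ → ∃ s, () ∉ G.label s ∧ s ∈ G.succ A σ q ∧ s ∈ G.succ A σ s)
    (x : Bool) : ¬ SSat G x q (.coal A Fp) := by
  rw [SSat_coal_Fp_iff]
  rintro ⟨σ, hσ, hwin⟩
  obtain ⟨s, hs, hqs, hss⟩ := htrap σ hσ
  obtain ⟨j, hj⟩ := hwin _ (G.OutObj_subset_Out x A σ q (iCGS.lasso_mem_OutObj hqs hss))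
  split_ifs at hj <;> contradiction

theorem G1ex_indist_equivalence : Equivalence (G1ex.indist ()) := by
  have hsymm : ∀ s t, G1ex.indist () s t → G1ex.indist () t s := by
    simp only [G1ex]
    decide
  have htrans : ∀ s t u, G1ex.indist () s t → G1ex.indist () t u → G1ex.indist () s u := by
    simp only [G1ex]
    decide
  exact ⟨fun _ => Or.inl rfl, hsymm _ _, htrans _ _ _⟩

theorem G1ex_valid : G1ex.Valid :=
  G1ex.valid_of_protocol_eq_univ (fun _ => G1ex_indist_equivalence) (fun _ _ => rfl)
    (by simp only [G1ex]; decide)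

theorem G1ex_not_SSat (x : Bool) : ¬ SSat G1ex x 0 (.coal Set.univ Fp) := by
  refine not_SSat_coal_Fp_of_trap (by simp [G1ex]) (fun σ hσ => ?_) x
  have huni : σ () 2 = σ () 1 := hσ.2 () trivial 2 trivial 1 trivial (Or.inr (Or.inr ⟨rfl, rfl⟩))
  obtain ⟨s, hs, hloop⟩ : ∃ s : Fin 4, (s = 1 ∨ s = 2) ∧ G1ex.trans s (fun _ => σ () 1) s := by
    generalize σ () 1 = c
    revert c
    simp only [G1ex]
    decide
  simp only [iCGS.mem_succ_univ]
  rcases hs with rfl | rfl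
  · exact ⟨1, by simp [G1ex], by simp [G1ex], hloop⟩
  · exact ⟨2, by simp [G1ex], by simp [G1ex], by
      show G1ex.trans 2 (fun _ => σ () 2) 2
      rwa [huni]⟩

/- States `q0' = 0, A = 1, B = 2, A' = 3, B' = 4, q3' = 5`; the agent observes `obs2`, so that
`A ∼ B'` and `B ∼ A'`. Row `0` of `next2` is never used: `q0'` moves to `A` or `B` whatever
the action. -/
def obs2 : Fin 6 → Fin 4 := ![0, 1, 2, 2, 1, 3]

def next2 : Fin 6 → Fin 2 → Fin 6 := ![![0, 0], ![3, 5], ![5, 4], ![3, 5], ![5, 2], ![5, 5]]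

def G2ex : iCGS Unit Unit (Fin 6) (Fin 2) where
  init := 0
  indist := fun _ s t => obs2 s = obs2 t
  protocol := fun _ _ => Set.univ
  trans := fun s a t => if s = 0 then t = 1 ∨ t = 2 else t = next2 s (a ())
  label := fun s => {_u | s = 5}

theorem G2ex_indist_equivalence : Equivalence (G2ex.indist ()) :=
  ⟨fun _ => rfl, Eq.symm, Eq.trans⟩

theorem G2ex_valid : G2ex.Valid :=
  G2ex.valid_of_protocol_eq_univ (fun _ => G2ex_indist_equivalence) (fun _ _ => rfl)
    (by simp only [G2ex]; decide)

def winStrat : Unit → Fin 6 → Fin 2 := fun _ s => if obs2 s = 1 then 0 else 1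

theorem winStrat_isStrat : G2ex.IsStrat Set.univ winStrat :=
  ⟨fun _ _ _ _ => trivial, fun _ _ s _ t _ (h : obs2 s = obs2 t) => by simp only [winStrat, h]⟩

theorem winStrat_run_three {lam : ℕ → Fin 6} (hlam : lam ∈ G2ex.OutObj Set.univ winStrat 0) :
    lam 3 = 5 := by
  obtain ⟨h0, hstep⟩ := hlam
  simp only [iCGS.mem_succ_univ] at hstep
  have key : ∀ s₁ s₂ s₃ : Fin 6, G2ex.trans 0 (fun _ => winStrat () 0) s₁ →
      G2ex.trans s₁ (fun _ => winStrat () s₁) s₂ → G2ex.trans s₂ (fun _ => winStrat () s₂) s₃ →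
      s₃ = 5 := by
    simp only [G2ex]
    decide
  exact key _ _ _ (h0 ▸ hstep 0) (hstep 1) (hstep 2)

theorem G2ex_SSat (x : Bool) : SSat G2ex x 0 (.coal Set.univ Fp) := by
  have hisolated : ∀ i ∈ Set.univ, ∀ r, G2ex.indist i 0 r → r = 0 := by
    simp only [G2ex]
    decide
  rw [SSat_coal_Fp_iff]
  refine ⟨winStrat, winStrat_isStrat, fun lam hlam => ⟨3, ?_⟩⟩
  rw [iCGS.Out_eq_OutObj hisolated] at hlam
  simp [G2ex, winStrat_run_three hlam]

def collapse : Fin 6 → Fin 4 := ![0, 1, 2, 1, 2, 3]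

theorem collapse_isBoundedMorphism : G2ex.IsBoundedMorphism G1ex Set.univ collapse where
  label_comp s := Set.ext fun _ => show (collapse s).val = 3 ↔ s = 5 by revert s; decide
  protocol_comp _ _ _ := rfl
  indist_forth := by simp only [G1ex, G2ex]; decide
  indist_back := by simp only [G1ex, G2ex]; decide
  trans_forth := by simp only [G1ex, G2ex]; decide
  trans_back := by simp only [G1ex, G2ex]; decide

theorem collapse_injOn_CKN (q : Fin 6) : Set.InjOn collapse (G2ex.CKN Set.univ q) := by
  intro s hs t ht
  rw [iCGS.mem_CKN_univ_iff G2ex_indist_equivalence] at hs ht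
  revert q s t
  simp only [G2ex]
  decide

/-- there are two finite single-agent iCGS related by a relation
satisfying all conditions of `A`-simulation (in both directions) except the
injectivity condition (2), which nevertheless disagree on `⟨⟨1⟩⟩F p` under the
imperfect-information memoryless uniform-strategy semantics (both variants);
moreover, concretely, `(G₁, q0) ⊭ ⟨⟨1⟩⟩F p`. -/
theorem weak_bisimulation_does_not_preserve :
    (∃ (S₁ S₂ : Type) (_ : Fintype S₁) (_ : Fintype S₂)
      (G₁ : iCGS Unit Unit S₁ (Fin 2)) (G₂ : iCGS Unit Unit S₂ (Fin 2))
      (q₀ : S₁) (q₀' : S₂) (R : S₁ → S₂ → Prop),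
      G₁.Valid ∧ G₂.Valid ∧
      G₁.IsWeakBisimulation G₂ Set.univ R ∧ R q₀ q₀' ∧
      ∀ x : Bool,
        ¬ SSat G₁ x q₀ (SF.coal Set.univ Fp) ∧
        SSat G₂ x q₀' (SF.coal Set.univ Fp)) ∧
    (∀ x : Bool, ¬ SSat G1ex x 0 (SF.coal Set.univ Fp)) :=
  ⟨⟨Fin 4, Fin 6, inferInstance, inferInstance, G1ex, G2ex, 0, 0, fun q q' => q = collapse q',
    G1ex_valid, G2ex_valid, collapse_isBoundedMorphism.isWeakBisimulation collapse_injOn_CKN, rfl,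
    fun x => ⟨G1ex_not_SSat x, G2ex_SSat x⟩⟩, G1ex_not_SSat⟩
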